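/- Let p, q be distinct primes with ord_p(q) = p − 1, and let F_p be the p×p Fourier matrix over 𝔽_{q^{p−1}} with entries ω^{jm} for a primitive p-th root of unity ω. If q does not divide m_{A,B}·p − ∏_{i<j}(a_j − a_i)/∏_{i<j}(j − i), then det((F_p)_{A,B}) ≠ 0. -/

import Mathlib

/-!
Specialising `hs` at `x_j = ω ^ b_j` writes the minor as a Vandermonde product, nonzero because
the `ω ^ b_j` are distinct, times `s(ω ^ b)`. If `s(ω ^ b) = 0`, applying powers of Frobenius, and
using that `q` generates `(ℤ/p)ˣ`, gives `s(ω ^ (t • b)) = 0` for every `t ≢ 0 mod p`. By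
orthogonality of the characters `t ↦ ω ^ (t ⟨μ, b⟩)`, the sum of `s(ω ^ (t • b))` over `t < p`
is `m p`; by the vanishing it is just the term `t = 0`, namely `s(1, …, 1)`. Specialising `hs` at
`x_j = X ^ j` and dividing out the powers of `X - 1` shows `s(1, …, 1) = N`, so `q ∣ m p - N`.
-/

open Finset MvPolynomial

theorem Finset.prod_filter_fst_lt_snd {M : Type*} [CommMonoid M] {k : ℕ}
    (f : Fin k × Fin k → M) :
    ∏ w ∈ univ.filter (fun w : Fin k × Fin k => w.1 < w.2), f w
      = ∏ i, ∏ j ∈ Ioi i, f (i, j) := by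
  rw [← univ_product_univ, prod_filter, prod_product]
  refine prod_congr rfl fun i _ => ?_
  rw [← filter_lt_eq_Ioi, prod_filter]

theorem prod_filter_fst_lt_snd_sub_ne_zero {R : Type*} [CommRing R] [IsDomain R] {k : ℕ}
    {v : Fin k → R} (hv : Function.Injective v) :
    ∏ w ∈ univ.filter (fun w : Fin k × Fin k => w.1 < w.2), (v w.2 - v w.1) ≠ 0 := by
  rw [prod_filter_fst_lt_snd, ← Matrix.det_vandermonde]
  exact Matrix.det_vandermonde_ne_zero_iff.mpr hv

theorem MvPolynomial.map_eval₂_intCastRingHom {σ R S : Type*} [CommRing R] [CommRing S]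
    (φ : R →+* S) (x : σ → R) (f : MvPolynomial σ ℤ) :
    φ (eval₂ (Int.castRingHom R) x f) = eval₂ (Int.castRingHom S) (φ ∘ x) f := by
  rw [eval₂_comp_left, RingHom.ext_int (φ.comp _) (Int.castRingHom S)]

theorem MvPolynomial.intCast_eval {σ R : Type*} [CommRing R] (x : σ → ℤ) (f : MvPolynomial σ ℤ) :
    ((eval x f : ℤ) : R) = eval₂ (Int.castRingHom R) (fun i => (x i : R)) f := by
  have h := map_eval₂_intCastRingHom (Int.castRingHom R) x f
  rwa [RingHom.ext_int (Int.castRingHom ℤ) (RingHom.id ℤ)] at h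

theorem MvPolynomial.eval₂_pow_expChar_pow {σ R : Type*} [CommRing R] (q : ℕ) [ExpChar R q]
    (n : ℕ) (x : σ → R) (f : MvPolynomial σ ℤ) :
    eval₂ (Int.castRingHom R) (fun j => x j ^ q ^ n) f
      = eval₂ (Int.castRingHom R) x f ^ q ^ n :=
  (map_eval₂_intCastRingHom (iterateFrobenius R q n) x f).symm

theorem FiniteField.exists_pow_eq_of_orderOf_eq {F : Type*} [Field F] [Fintype F] {g : F}
    (hg : orderOf g = Fintype.card F - 1) {t : F} (ht : t ≠ 0) : ∃ n, g ^ n = t := by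
  have : NeZero (Fintype.card F - 1) := ⟨by have := Fintype.one_lt_card (α := F); omega⟩
  obtain ⟨n, -, hn⟩ := (hg ▸ IsPrimitiveRoot.orderOf g).eq_pow_of_pow_eq_one
    (FiniteField.pow_card_sub_one_eq_one t ht)
  exact ⟨n, hn⟩

theorem MvPolynomial.eval₂_pow_mul_eq_zero {σ R : Type*} [CommRing R] {p q : ℕ} [Fact p.Prime]
    [ExpChar R q] (hq : orderOf (q : ZMod p) = p - 1) {ω : R} (hω : ω ^ p = 1) {b : σ → ℕ}
    {f : MvPolynomial σ ℤ} (hf : eval₂ (Int.castRingHom R) (fun j => ω ^ b j) f = 0) {t : ℕ}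
    (ht : (t : ZMod p) ≠ 0) :
    eval₂ (Int.castRingHom R) (fun j => ω ^ (t * b j)) f = 0 := by
  obtain ⟨n, hn⟩ := FiniteField.exists_pow_eq_of_orderOf_eq (by rwa [ZMod.card]) ht
  have hconj : (fun j => ω ^ (t * b j)) = fun j => (ω ^ b j) ^ q ^ n := by
    funext j
    have hmod : t * b j ≡ q ^ n * b j [MOD p] :=
      .mul_right _ ((ZMod.natCast_eq_natCast_iff _ _ _).mp (by push_cast; exact hn.symm))
    rw [← pow_mul, mul_comm (b j), pow_eq_pow_mod _ hω, hmod, ← pow_eq_pow_mod _ hω]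
  rw [hconj, eval₂_pow_expChar_pow, hf, zero_pow (pow_ne_zero _ (expChar_pos R q).ne')]

theorem IsPrimitiveRoot.sum_range_pow_pow_eq {R : Type*} [CommRing R] [IsDomain R] {ω : R}
    {p : ℕ} (hω : IsPrimitiveRoot ω p) (e : ℕ) :
    ∑ t ∈ range p, (ω ^ e) ^ t = if p ∣ e then (p : R) else 0 := by
  split_ifs with h
  · simp [(hω.pow_eq_one_iff_dvd e).mpr h]
  · have hne : ω ^ e - 1 ≠ 0 := sub_ne_zero.mpr (mt (hω.pow_eq_one_iff_dvd e).mp h)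
    refine (mul_eq_zero.mp ?_).resolve_right hne
    rw [geom_sum_mul, ← pow_mul, mul_comm, pow_mul, hω.pow_eq_one, one_pow, sub_self]

theorem IsPrimitiveRoot.sum_range_eval₂_pow_mul {σ R : Type*} [Fintype σ] [CommRing R]
    [IsDomain R] {ω : R} {p : ℕ} (hω : IsPrimitiveRoot ω p) (b : σ → ℕ)
    (f : MvPolynomial σ ℤ) :
    ∑ t ∈ range p, eval₂ (Int.castRingHom R) (fun j => ω ^ (t * b j)) f
      = ((∑ μ ∈ f.support,
          f.coeff μ * if (p : ℤ) ∣ ∑ j, (μ j : ℤ) * (b j : ℤ) then 1 else 0 : ℤ) : R) * p := by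
  have hmonomial : ∀ (t : ℕ) (μ : σ →₀ ℕ),
      ∏ j, (ω ^ (t * b j)) ^ μ j = (ω ^ ∑ j, μ j * b j) ^ t := by
    intro t μ
    rw [← pow_mul, sum_mul, ← prod_pow_eq_pow_sum]
    exact prod_congr rfl fun j _ => by rw [← pow_mul]; ring_nf
  simp_rw [eval₂_eq', hmonomial]
  rw [sum_comm, Int.cast_sum, sum_mul]
  refine sum_congr rfl fun μ _ => ?_
  have hcast : (∑ j, (μ j : ℤ) * (b j : ℤ)) = ((∑ j, μ j * b j : ℕ) : ℤ) := by push_cast; rfl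
  rw [← mul_sum, hω.sum_range_pow_pow_eq]
  simp only [hcast, Int.natCast_dvd_natCast]
  split_ifs <;> simp

theorem Polynomial.X_pow_sub_X_pow_eq_X_sub_one_mul {R : Type*} [CommRing R] {c d : ℕ}
    (h : d ≤ c) :
    (Polynomial.X : Polynomial R) ^ c - Polynomial.X ^ d
      = (Polynomial.X - 1) * (Polynomial.X ^ d * ∑ i ∈ range (c - d), Polynomial.X ^ i) := by
  rw [mul_left_comm, mul_geom_sum, mul_sub, mul_one, ← pow_add, Nat.add_sub_cancel' h]

theorem Polynomial.exists_prod_X_pow_sub_X_pow_eq {R ι : Type*} [CommRing R] (P : Finset ι)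
    (c d : ι → ℕ) (h : ∀ w ∈ P, d w ≤ c w) :
    ∃ g : Polynomial R, ∏ w ∈ P, (Polynomial.X ^ c w - Polynomial.X ^ d w)
        = (Polynomial.X - 1) ^ #P * g ∧ g.eval 1 = ∏ w ∈ P, ((c w : R) - d w) := by
  refine ⟨∏ w ∈ P, Polynomial.X ^ d w * ∑ i ∈ range (c w - d w), Polynomial.X ^ i, ?_, ?_⟩
  · rw [← prod_const, ← prod_mul_distrib]
    exact prod_congr rfl fun w hw => X_pow_sub_X_pow_eq_X_sub_one_mul (h w hw)
  · rw [eval_prod]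
    exact prod_congr rfl fun w hw => by simp [Nat.cast_sub (h w hw)]

theorem det_pow_eq_prod_sub_mul_eval₂ {R : Type*} [CommRing R] {k : ℕ} {a : Fin k → ℕ}
    {s : MvPolynomial (Fin k) ℤ}
    (hs : Matrix.det (fun i j : Fin k => (X j : MvPolynomial (Fin k) ℤ) ^ a i)
        = (∏ w ∈ univ.filter (fun w : Fin k × Fin k => w.1 < w.2), (X w.2 - X w.1)) * s)
    (x : Fin k → R) :
    Matrix.det (fun i j : Fin k => x j ^ a i)
      = (∏ w ∈ univ.filter (fun w : Fin k × Fin k => w.1 < w.2), (x w.2 - x w.1))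
        * eval₂ (Int.castRingHom R) x s := by
  set φ := eval₂Hom (Int.castRingHom R) x
  calc Matrix.det (fun i j : Fin k => x j ^ a i)
      = (φ.mapMatrix fun i j : Fin k => (X j : MvPolynomial (Fin k) ℤ) ^ a i).det := by
        congr 1; ext i j; change x j ^ a i = φ (X j ^ a i); simp [φ]
    _ = φ ((∏ w ∈ univ.filter (fun w : Fin k × Fin k => w.1 < w.2), (X w.2 - X w.1)) * s) := by
        rw [← hs]; exact (RingHom.map_det φ _).symm
    _ = _ := by simp [φ]

theorem prod_filter_lt_sub_eq_mul_eval_one {k : ℕ} {a : Fin k → ℕ} (ha : StrictMono a)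
    {s : MvPolynomial (Fin k) ℤ}
    (hs : Matrix.det (fun i j : Fin k => (X j : MvPolynomial (Fin k) ℤ) ^ a i)
        = (∏ w ∈ univ.filter (fun w : Fin k × Fin k => w.1 < w.2), (X w.2 - X w.1)) * s) :
    ∏ w ∈ univ.filter (fun w : Fin k × Fin k => w.1 < w.2), ((a w.2 : ℤ) - a w.1)
      = (∏ w ∈ univ.filter (fun w : Fin k × Fin k => w.1 < w.2), ((w.2 : ℤ) - w.1))
        * eval (fun _ => 1) s := by
  have hspec := det_pow_eq_prod_sub_mul_eval₂ hs
    (fun j : Fin k => (Polynomial.X : Polynomial ℤ) ^ (j : ℕ))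
  have hvand : Matrix.det (fun i j : Fin k => ((Polynomial.X : Polynomial ℤ) ^ (j : ℕ)) ^ a i)
      = ∏ w ∈ univ.filter (fun w : Fin k × Fin k => w.1 < w.2),
          (Polynomial.X ^ a w.2 - Polynomial.X ^ a w.1) := by
    trans (Matrix.vandermonde fun i => (Polynomial.X : Polynomial ℤ) ^ a i).det
    · congr 1; ext i j; simp [← pow_mul, mul_comm]
    · rw [Matrix.det_vandermonde, prod_filter_fst_lt_snd]
  obtain ⟨g, hg, hg1⟩ := Polynomial.exists_prod_X_pow_sub_X_pow_eq (R := ℤ) _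
    (fun w : Fin k × Fin k => a w.2) (fun w => a w.1) fun w hw => (ha (mem_filter.mp hw).2).le
  obtain ⟨h, hh, hh1⟩ := Polynomial.exists_prod_X_pow_sub_X_pow_eq (R := ℤ) _
    (fun w : Fin k × Fin k => w.2) (fun w => w.1)
    fun w hw => (Fin.lt_def.mp (mem_filter.mp hw).2).le
  rw [hvand, hg, hh, mul_assoc] at hspec
  have := congrArg (Polynomial.eval 1)
    (mul_left_cancel₀ (pow_ne_zero _ (Polynomial.X_sub_C_ne_zero 1)) hspec)
  rw [Polynomial.eval_mul, hg1, hh1, ← Polynomial.coe_evalRingHom, map_eval₂_intCastRingHom] at this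
  simpa [RingHom.ext_int (Int.castRingHom ℤ) (RingHom.id ℤ), Function.comp_def] using this

theorem finite_field_minor_nonzero_of_not_dvd_general
    (p q : ℕ) [Fact q.Prime] [Fact p.Prime]
    (hr : orderOf (q : ZMod p) = p - 1)
    (ω : GaloisField q (p - 1)) (hω : IsPrimitiveRoot ω p)
    (k : ℕ) (a b : Fin k → ℕ)
    (ha : StrictMono a) (hb : StrictMono b)
    (hbp : ∀ i, b i < p)
    (s : MvPolynomial (Fin k) ℤ)
    (hs : Matrix.det (fun i j : Fin k => (MvPolynomial.X j : MvPolynomial (Fin k) ℤ) ^ a i)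
        = (∏ w ∈ Finset.univ.filter (fun w : Fin k × Fin k => w.1 < w.2),
            (MvPolynomial.X w.2 - MvPolynomial.X w.1)) * s)
    (m : ℤ)
    (hm : m = ∑ μ ∈ s.support,
        s.coeff μ * (if (p : ℤ) ∣ (∑ j : Fin k, (μ j : ℤ) * (b j : ℤ)) then 1 else 0))
    (N : ℤ)
    (hN : N * (∏ w ∈ Finset.univ.filter (fun w : Fin k × Fin k => w.1 < w.2),
            ((w.2 : ℤ) - (w.1 : ℤ)))
        = ∏ w ∈ Finset.univ.filter (fun w : Fin k × Fin k => w.1 < w.2),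
            ((a w.2 : ℤ) - (a w.1 : ℤ)))
    (hdvd : ¬ (q : ℤ) ∣ (m * p - N)) :
    Matrix.det (fun i j : Fin k => ω ^ (a i * b j)) ≠ 0 := by
  have hN_eval : N = eval (fun _ => 1) s := by
    refine mul_right_cancel₀ (prod_filter_fst_lt_snd_sub_ne_zero (v := fun i : Fin k => (i : ℤ))
      fun i j hij => Fin.ext (Int.ofNat_inj.mp hij)) ?_
    rw [hN, prod_filter_lt_sub_eq_mul_eval_one ha hs, mul_comm]
  have hpow : (fun i j : Fin k => ω ^ (a i * b j)) = fun i j => (ω ^ b j) ^ a i := by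
    ext i j; rw [← pow_mul, mul_comm]
  rw [hpow, det_pow_eq_prod_sub_mul_eval₂ hs]
  refine mul_ne_zero (prod_filter_fst_lt_snd_sub_ne_zero
    fun i j hij => hb.injective (hω.pow_inj (hbp i) (hbp j) hij)) fun hD => hdvd ?_
  have hsum := hω.sum_range_eval₂_pow_mul b s
  rw [← hm, sum_eq_single_of_mem 0 (mem_range.mpr (Fact.out : p.Prime).pos) fun t ht ht0 =>
    eval₂_pow_mul_eq_zero hr hω.pow_eq_one hD <| (ZMod.natCast_eq_zero_iff t p).not.mpr <|
      Nat.not_dvd_of_pos_of_lt (Nat.pos_of_ne_zero ht0) (mem_range.mp ht)] at hsum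
  simp only [zero_mul, pow_zero] at hsum
  rw [← (CharP.intCast_eq_zero_iff (GaloisField q (p - 1)) q _), hN_eval, Int.cast_sub,
    MvPolynomial.intCast_eval]
  push_cast at hsum ⊢
  rw [← hsum, sub_self]

/-- If `q ∤ m_{A,B}·p − ∏_{i<j}(a_j−a_i)/∏_{i<j}(j−i)` then the minor
`det((F_p)_{A,B})` of the Fourier matrix over `𝔽_{q^{p-1}}` is nonzero. -/
theorem finite_field_minor_nonzero_of_not_dvd
    (p q : ℕ) (hp : p.Prime) (hq : q.Prime) (hpq : p ≠ q) [Fact q.Prime] [Fact p.Prime]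
    (hr : orderOf (q : ZMod p) = p - 1)
    (ω : GaloisField q (p - 1)) (hω : IsPrimitiveRoot ω p)
    (k : ℕ) (a b : Fin k → ℕ)
    (ha : StrictMono a) (hb : StrictMono b)
    (hap : ∀ i, a i < p) (hbp : ∀ i, b i < p)
    (s : MvPolynomial (Fin k) ℤ)
    (hs : Matrix.det (fun i j : Fin k => (MvPolynomial.X j : MvPolynomial (Fin k) ℤ) ^ a i)
        = (∏ w ∈ Finset.univ.filter (fun w : Fin k × Fin k => w.1 < w.2),
            (MvPolynomial.X w.2 - MvPolynomial.X w.1)) * s)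
    (m : ℤ)
    (hm : m = ∑ μ ∈ s.support,
        s.coeff μ * (if (p : ℤ) ∣ (∑ j : Fin k, (μ j : ℤ) * (b j : ℤ)) then 1 else 0))
    (N : ℤ)
    (hN : N * (∏ w ∈ Finset.univ.filter (fun w : Fin k × Fin k => w.1 < w.2),
            ((w.2 : ℤ) - (w.1 : ℤ)))
        = ∏ w ∈ Finset.univ.filter (fun w : Fin k × Fin k => w.1 < w.2),
            ((a w.2 : ℤ) - (a w.1 : ℤ)))
    (hdvd : ¬ (q : ℤ) ∣ (m * p - N)) :
    Matrix.det (fun i j : Fin k => ω ^ (a i * b j)) ≠ 0 :=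
  finite_field_minor_nonzero_of_not_dvd_general p q hr ω hω k a b ha hb hbp s hs m hm N hN hdvd
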